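/- arXiv:1509.07980 — 3 statements merged into one kernel-verified Lean document; each statement's English description precedes it below -/
import Mathlib

section
/- Let k ≥ 1 and let A be a k-potent commutative integral residuated lattice. The following are equivalent: (i) there exists a ∈ A with a ≠ 1 such that b^k ≤ a for every b ∈ A with b ≠ 1; (ii) the element 1 is completely join irreducible in A; (iii) A has a second-greatest element. (Condition (i) is the standard criterion for subdirect irreducibility of commutative integral residuated lattices.) -/
/-- A commutative integral residuated lattice. -/
class CIRL (α : Type*) extends CommMonoid α, Lattice α, HImp α where
  residuation : ∀ x y z : α, x * y ≤ z ↔ y ≤ x ⇨ z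
  le_one : ∀ x : α, x ≤ 1

/-! The implication (i) ⇒ (ii) carries the content. By (i), 1 is join irreducible: if
`b ⊔ c = 1` then `b ^ k ⊔ c ^ k = 1`, which lies below `a`. Multiplication is residuated, so it
preserves existing joins and `D ^ k` has join 1 whenever `D` has. If `1 ∉ D`, a product of `k`
elements of `D` lies below `m ^ k` for the join `m ≠ 1` of its factors, hence below `a`, forcing
`a = 1`. -/

theorem IsTop.exists_ne_forall_le_of_forall_isLUB_mem {β : Type*} [Preorder β] {t : β}
    (ht : IsTop t) (h : ∀ D : Set β, IsLUB D t → t ∈ D) : ∃ s, s ≠ t ∧ ∀ x, x ≠ t → x ≤ s := by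
  by_contra! hs
  refine h {x | x ≠ t} ⟨fun x _ => ht x, fun v hv => ?_⟩ rfl
  by_contra hvt
  obtain ⟨x, hx, hxv⟩ := hs v (fun h => hvt (h ▸ le_rfl))
  exact hxv (hv hx)

open Pointwise

namespace CIRL

variable {α : Type*} [CIRL α]

theorem gc_mul_himp (x : α) : GaloisConnection (x * ·) (x ⇨ ·) :=
  fun y z => residuation x y z

instance : IsOrderedMonoid α where
  mul_le_mul_left a b h c := by
    rw [mul_comm a, mul_comm b]
    exact (gc_mul_himp c).monotone_l h

protected theorem mul_sup (x y z : α) : x * (y ⊔ z) = x * y ⊔ x * z :=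
  (gc_mul_himp x).l_sup

protected theorem sup_mul (x y z : α) : (y ⊔ z) * x = y * x ⊔ z * x := by
  simp only [mul_comm _ x, CIRL.mul_sup]

theorem sup_pow_eq_one {b c : α} (h : b ⊔ c = 1) (n : ℕ) : b ⊔ c ^ n = 1 := by
  induction n with
  | zero => exact le_antisymm (le_one _) (by simp)
  | succ n ih =>
    refine le_antisymm (le_one _) ?_
    calc (1 : α) = (b ⊔ c) * (b ⊔ c ^ n) := by rw [h, ih, one_mul]
      _ = b * (b ⊔ c ^ n) ⊔ (c * b ⊔ c * c ^ n) := by rw [CIRL.sup_mul, CIRL.mul_sup c]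
      _ ≤ b ⊔ c ^ (n + 1) := by
        rw [← pow_succ']
        exact sup_le (le_sup_of_le_left (mul_le_of_le_one_right' (le_one _)))
          (sup_le_sup_right (mul_le_of_le_one_left' (le_one _)) _)

theorem pow_sup_pow_eq_one {b c : α} (h : b ⊔ c = 1) (m n : ℕ) : b ^ m ⊔ c ^ n = 1 := by
  have h' : c ^ n ⊔ b = 1 := by rw [sup_comm]; exact sup_pow_eq_one h n
  rw [sup_comm]
  exact sup_pow_eq_one h' m

theorem isLUB_mul {D E : Set α} {a b : α} (hD : IsLUB D a) (hE : IsLUB E b) :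
    IsLUB (D * E) (a * b) := by
  refine ⟨?_, fun v hv => ?_⟩
  · rintro _ ⟨d, hd, e, he, rfl⟩
    exact mul_le_mul' (hD.1 hd) (hE.1 he)
  · have hDv : ∀ e ∈ E, e * a ≤ v := fun e he => by
      refine ((gc_mul_himp e).isLUB_l_image hD).2 ?_
      rintro _ ⟨d, hd, rfl⟩
      exact (mul_comm e d).trans_le (hv (Set.mul_mem_mul hd he))
    refine ((gc_mul_himp a).isLUB_l_image hE).2 ?_
    rintro _ ⟨e, he, rfl⟩
    exact (mul_comm a e).trans_le (hDv e he)

theorem isLUB_pow {D : Set α} {a : α} (hD : IsLUB D a) (n : ℕ) : IsLUB (D ^ n) (a ^ n) := by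
  induction n with
  | zero => simpa only [pow_zero, ← Set.singleton_one] using isLUB_singleton
  | succ n ih => simpa only [pow_succ] using isLUB_mul ih hD

theorem exists_le_pow_of_mem_pow {D : Set α} (hD : (1 : α) ∉ D)
    (hsup : ∀ b c : α, b ≠ 1 → c ≠ 1 → b ⊔ c ≠ 1) {n : ℕ} {p : α} (hp : p ∈ D ^ (n + 1)) :
    ∃ m : α, m ≠ 1 ∧ p ≤ m ^ (n + 1) := by
  induction n generalizing p with
  | zero => exact ⟨p, fun h => hD (h ▸ by simpa using hp), by simp⟩
  | succ n ih =>
    obtain ⟨q, hq, d, hd, rfl⟩ := Set.mem_mul.mp (pow_succ D (n + 1) ▸ hp)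
    obtain ⟨m, hm, hqm⟩ := ih hq
    refine ⟨m ⊔ d, hsup m d hm (ne_of_mem_of_not_mem hd hD), ?_⟩
    rw [pow_succ]
    exact mul_le_mul' (hqm.trans (pow_le_pow_left' le_sup_left _)) le_sup_right

end CIRL

theorem stmt2_general {α : Type*} [CIRL α] (k : ℕ) (hk : 1 ≤ k) :
    List.TFAE
      [∃ a : α, a ≠ 1 ∧ ∀ b : α, b ≠ 1 → b ^ k ≤ a,
       ∀ D : Set α, IsLUB D 1 → (1 : α) ∈ D,
       ∃ s : α, s ≠ 1 ∧ ∀ x : α, x ≠ 1 → x ≤ s] := by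
  obtain ⟨k, rfl⟩ : ∃ n, k = n + 1 := ⟨k - 1, by omega⟩
  tfae_have 1 → 2 := by
    rintro ⟨a, ha, hpow⟩ D hD
    by_contra hnD
    have hsup : ∀ b c : α, b ≠ 1 → c ≠ 1 → b ⊔ c ≠ 1 := fun b c hb hc h =>
      ha (le_antisymm (CIRL.le_one a)
        (CIRL.pow_sup_pow_eq_one h _ _ ▸ sup_le (hpow b hb) (hpow c hc)))
    have hDk : IsLUB (D ^ (k + 1)) 1 := by simpa using CIRL.isLUB_pow hD (k + 1)
    refine ha (le_antisymm (CIRL.le_one a) (hDk.2 fun p hp => ?_))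
    obtain ⟨m, hm, hpm⟩ := CIRL.exists_le_pow_of_mem_pow hnD hsup hp
    exact hpm.trans (hpow m hm)
  tfae_have 2 → 3 := IsTop.exists_ne_forall_le_of_forall_isLUB_mem CIRL.le_one
  tfae_have 3 → 1 := fun ⟨s, hs, h⟩ =>
    ⟨s, hs, fun b hb => (pow_le_pow_right_of_le_one' (CIRL.le_one b) k.succ_pos).trans
      (by simpa using h b hb)⟩
  tfae_finish

theorem stmt2 {α : Type*} [CIRL α] (k : ℕ) (hk : 1 ≤ k)
    (hpot : ∀ x : α, x ^ (k + 1) = x ^ k) :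
    List.TFAE
      [∃ a : α, a ≠ 1 ∧ ∀ b : α, b ≠ 1 → b ^ k ≤ a,
       ∀ D : Set α, IsLUB D 1 → (1 : α) ∈ D,
       ∃ s : α, s ≠ 1 ∧ ∀ x : α, x ≠ 1 → x ≤ s] :=
  stmt2_general k hk
end

section
/- Let B be a bounded commutative integral residuated lattice with least element ⊥, and let A ⊆ B be a finite subset with ⊥ ∈ A and 1 ∈ A which is closed under · and ∨. Then for all a, b ∈ A the set {c ∈ A : a·c ≤ b} has a greatest element, denoted a →' b; it belongs to A and satisfies: (i) for all c ∈ A, a·c ≤ b if and only if c ≤ a →' b; (ii) a →' b ≤ a → b; and (iii) if a → b ∈ A then a →' b = a → b. -/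
theorem SupClosed.exists_isGreatest_of_finite {α : Type*} [SemilatticeSup α] {s : Set α}
    (hs : SupClosed s) (hfin : s.Finite) (hne : s.Nonempty) : ∃ m, IsGreatest s m := by
  obtain ⟨m, hm⟩ := hfin.exists_maximal hne
  exact ⟨m, hm.prop, fun c hc => le_sup_right.trans (hm.le_of_ge (hs hm.prop hc) le_sup_left)⟩

namespace CIRL

variable {β : Type*} [CIRL β]

theorem mul_himp_le (a b : β) : a * (a ⇨ b) ≤ b :=
  (residuation a _ b).mpr le_rfl

theorem mul_le_mul_of_le (a : β) {y z : β} (h : y ≤ z) : a * y ≤ a * z :=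
  (residuation a y _).mpr (h.trans ((residuation a z _).mp le_rfl))

theorem supClosed_setOf_mul_le (a b : β) : SupClosed {c : β | a * c ≤ b} := by
  intro x hx y hy
  simp only [Set.mem_ofPred_eq, residuation] at hx hy ⊢
  exact sup_le hx hy

end CIRL

theorem stmt5_general {β : Type*} [CIRL β] [OrderBot β] (A : Set β) (hfin : A.Finite)
    (hbot : (⊥ : β) ∈ A)
    (hsup : ∀ x ∈ A, ∀ y ∈ A, x ⊔ y ∈ A) :
    ∀ a ∈ A, ∀ b ∈ A, ∃ m : β,
      IsGreatest {c : β | c ∈ A ∧ a * c ≤ b} m ∧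
      (∀ c ∈ A, a * c ≤ b ↔ c ≤ m) ∧
      m ≤ a ⇨ b ∧
      ((a ⇨ b) ∈ A → m = a ⇨ b) := by
  intro a _ b _
  have hclosed : SupClosed {c : β | c ∈ A ∧ a * c ≤ b} :=
    SupClosed.inter (fun x hx y hy => hsup x hx y hy) (CIRL.supClosed_setOf_mul_le a b)
  have hbot_mem : (⊥ : β) ∈ {c : β | c ∈ A ∧ a * c ≤ b} :=
    ⟨hbot, (CIRL.mul_le_mul_of_le a bot_le).trans (CIRL.mul_himp_le a b)⟩
  obtain ⟨m, hm⟩ := hclosed.exists_isGreatest_of_finite (hfin.subset fun _ hc => hc.1) ⟨⊥, hbot_mem⟩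
  have hm_le : m ≤ a ⇨ b := (CIRL.residuation a m b).mp hm.1.2
  refine ⟨m, hm, fun c hc => ⟨fun h => hm.2 ⟨hc, h⟩, fun h => ?_⟩, hm_le, fun himp => ?_⟩
  · exact (CIRL.mul_le_mul_of_le a h).trans hm.1.2
  · exact hm_le.antisymm (hm.2 ⟨himp, CIRL.mul_himp_le a b⟩)

theorem stmt5 {β : Type*} [CIRL β] [OrderBot β] (A : Set β) (hfin : A.Finite)
    (hbot : (⊥ : β) ∈ A) (hone : (1 : β) ∈ A)
    (hmul : ∀ x ∈ A, ∀ y ∈ A, x * y ∈ A) (hsup : ∀ x ∈ A, ∀ y ∈ A, x ⊔ y ∈ A) :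
    ∀ a ∈ A, ∀ b ∈ A, ∃ m : β,
      IsGreatest {c : β | c ∈ A ∧ a * c ≤ b} m ∧
      (∀ c ∈ A, a * c ≤ b ↔ c ≤ m) ∧
      m ≤ a ⇨ b ∧
      ((a ⇨ b) ∈ A → m = a ⇨ b) :=
  stmt5_general A hfin hbot hsup
end

section
/- Let k ≥ 1 and let B be a k-potent commutative integral residuated lattice whose order is not total (there exist incomparable elements). Then there exists a finite subset J ⊆ B with 1 ∈ J, closed under · and ∨, containing two incomparable elements, and with |J| ≤ 2^((k+1)^2). -/
section PowTrunc

variable {M : Type*} [Monoid M] {x : M} {k : ℕ}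

theorem pow_eq_pow_min_of_pow_succ_eq (h : x ^ (k + 1) = x ^ k) (n : ℕ) :
    x ^ n = x ^ min n k := by
  rcases le_total n k with hn | hn
  · rw [min_eq_left hn]
  · rw [min_eq_right hn]
    induction n, hn using Nat.le_induction with
    | base => rfl
    | succ n _ ih => rw [pow_succ, ih, ← pow_succ, h]

end PowTrunc

section Monomials

variable {M : Type*} [CommMonoid M] [DecidableEq M]

def boundedMonomials (x y : M) (k : ℕ) : Finset M :=
  (Finset.range (k + 1) ×ˢ Finset.range (k + 1)).image fun p => x ^ p.1 * y ^ p.2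

variable {x y : M} {k : ℕ}

theorem card_boundedMonomials_le : (boundedMonomials x y k).card ≤ (k + 1) ^ 2 :=
  Finset.card_image_le.trans (by simp [sq])

theorem pow_mul_pow_mem_boundedMonomials (hx : x ^ (k + 1) = x ^ k) (hy : y ^ (k + 1) = y ^ k)
    (i j : ℕ) : x ^ i * y ^ j ∈ boundedMonomials x y k := by
  rw [pow_eq_pow_min_of_pow_succ_eq hx, pow_eq_pow_min_of_pow_succ_eq hy]
  exact Finset.mem_image.2 ⟨(min i k, min j k),
    Finset.mem_product.2 ⟨Finset.mem_range.2 (by omega), Finset.mem_range.2 (by omega)⟩, rfl⟩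

theorem mul_mem_boundedMonomials (hx : x ^ (k + 1) = x ^ k) (hy : y ^ (k + 1) = y ^ k)
    {a b : M} (ha : a ∈ boundedMonomials x y k) (hb : b ∈ boundedMonomials x y k) :
    a * b ∈ boundedMonomials x y k := by
  obtain ⟨⟨i, j⟩, -, rfl⟩ := Finset.mem_image.mp ha
  obtain ⟨⟨i', j'⟩, -, rfl⟩ := Finset.mem_image.mp hb
  rw [mul_mul_mul_comm, ← pow_add, ← pow_add]
  exact pow_mul_pow_mem_boundedMonomials hx hy _ _

end Monomials

section SupClosure

variable {α : Type*} [SemilatticeSup α]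

theorem isLUB_inter_Iic_of_mem_supClosure {s : Set α} {a : α} (ha : a ∈ supClosure s) :
    IsLUB (s ∩ Set.Iic a) a := by
  obtain ⟨t, ht, hts, rfl⟩ := ha
  refine ⟨fun b hb => hb.2, fun u hu => Finset.sup'_le _ _ fun b hb => hu ⟨hts hb, ?_⟩⟩
  exact Finset.le_sup' id hb

theorem injOn_inter_Iic_supClosure (s : Set α) :
    Set.InjOn (fun a => s ∩ Set.Iic a) (supClosure s) :=
  fun a ha b hb (hab : s ∩ Set.Iic a = s ∩ Set.Iic b) =>
    (isLUB_inter_Iic_of_mem_supClosure ha).unique (hab ▸ isLUB_inter_Iic_of_mem_supClosure hb)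

theorem Finset.ncard_supClosure_le (s : Finset α) :
    (supClosure (s : Set α)).ncard ≤ 2 ^ s.card :=
  calc (supClosure (s : Set α)).ncard ≤ (𝒫 (s : Set α)).ncard :=
        Set.ncard_le_ncard_of_injOn _ (fun _ _ => Set.inter_subset_left)
          (injOn_inter_Iic_supClosure _) s.finite_toSet.powerset
    _ = 2 ^ s.card := by rw [Set.ncard_powerset _ s.finite_toSet, Set.ncard_coe_finset]

end SupClosure

namespace CIRL

variable {B : Type*} [CIRL B]

theorem mul_sup_s16 (a b c : B) : a * (b ⊔ c) = a * b ⊔ a * c :=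
  eq_of_forall_ge_iff fun d => by
    rw [residuation, sup_le_iff, sup_le_iff, residuation, residuation]

theorem sup_mul_s16 (a b c : B) : (a ⊔ b) * c = a * c ⊔ b * c := by
  simp only [mul_comm _ c, mul_sup_s16]

theorem mul_mem_supClosure {s : Set B} (hs : ∀ a ∈ s, ∀ b ∈ s, a * b ∈ s) {a b : B}
    (ha : a ∈ supClosure s) (hb : b ∈ supClosure s) : a * b ∈ supClosure s := by
  have left_mem : ∀ a ∈ s, supClosure s ⊆ {b | a * b ∈ supClosure s} := fun a ha =>
    supClosure_min (fun b hb => subset_supClosure (hs a ha b hb)) fun b hb c hc => by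
      simpa only [Set.mem_ofPred_eq, mul_sup_s16] using supClosed_supClosure hb hc
  refine supClosure_min (t := {a | ∀ b ∈ supClosure s, a * b ∈ supClosure s})
    (fun a ha b hb => left_mem a ha hb) (fun a ha a' ha' b hb => ?_) ha b hb
  simpa only [sup_mul_s16] using supClosed_supClosure (ha b hb) (ha' b hb)

end CIRL

theorem stmt16_general {B : Type*} [CIRL B] (k : ℕ)
    (hpot : ∀ x : B, x ^ (k + 1) = x ^ k)
    (hnt : ∃ x y : B, ¬ x ≤ y ∧ ¬ y ≤ x) :
    ∃ J : Finset B, (1 : B) ∈ J ∧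
      (∀ x ∈ J, ∀ y ∈ J, x * y ∈ J) ∧
      (∀ x ∈ J, ∀ y ∈ J, x ⊔ y ∈ J) ∧
      (∃ a ∈ J, ∃ b ∈ J, ¬ a ≤ b ∧ ¬ b ≤ a) ∧
      J.card ≤ 2 ^ ((k + 1) ^ 2) := by
  classical
  obtain ⟨x, y, hxy, hyx⟩ := hnt
  set M := boundedMonomials x y k
  have hM : ∀ i j, x ^ i * y ^ j ∈ supClosure (M : Set B) := fun i j =>
    subset_supClosure (pow_mul_pow_mem_boundedMonomials (hpot x) (hpot y) i j)
  have hfin : (supClosure (M : Set B)).Finite := M.finite_toSet.supClosure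
  refine ⟨hfin.toFinset, ?_, ?_, ?_, ⟨x, ?_, y, ?_, hxy, hyx⟩, ?_⟩
  · simpa using hM 0 0
  · simpa using fun a ha b hb => CIRL.mul_mem_supClosure
      (fun a ha b hb => mul_mem_boundedMonomials (hpot x) (hpot y) ha hb) ha hb
  · simpa using fun a ha b hb => supClosed_supClosure ha hb
  · simpa using hM 1 0
  · simpa using hM 0 1
  · calc hfin.toFinset.card = (supClosure (M : Set B)).ncard :=
          (Set.ncard_eq_toFinset_card _ _).symm
      _ ≤ 2 ^ M.card := M.ncard_supClosure_le
      _ ≤ 2 ^ ((k + 1) ^ 2) := Nat.pow_le_pow_right two_pos card_boundedMonomials_le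

theorem stmt16 {B : Type*} [CIRL B] (k : ℕ) (hk : 1 ≤ k)
    (hpot : ∀ x : B, x ^ (k + 1) = x ^ k)
    (hnt : ∃ x y : B, ¬ x ≤ y ∧ ¬ y ≤ x) :
    ∃ J : Finset B, (1 : B) ∈ J ∧
      (∀ x ∈ J, ∀ y ∈ J, x * y ∈ J) ∧
      (∀ x ∈ J, ∀ y ∈ J, x ⊔ y ∈ J) ∧
      (∃ a ∈ J, ∃ b ∈ J, ¬ a ≤ b ∧ ¬ b ≤ a) ∧
      J.card ≤ 2 ^ ((k + 1) ^ 2) :=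
  stmt16_general k hpot hnt
end
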